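/- arXiv:1704.01413 — 5 statements merged into one kernel-verified Lean document; each statement's English description precedes it below -/
import Mathlib

section
/- Let σ : S² → S² be the involution σ(x,y,z) = (−x,−y,z) on the unit sphere S² ⊂ ℝ³, and let A = {(x,y,z) ∈ S² : z = 0} be the equator. There is no continuous map H : S² × [0,1] → S² such that H(σ(v),t) = σ(H(v,t)) for all v ∈ S² and t ∈ [0,1], H(v,0) = v for all v ∈ S², and {v ∈ S² : H(v,1) = v} = A. In other words, the equator cannot be realized as the fixed point set of any map ℤ₂-homotopic to the identity. -/
/-- The unit 2-sphere in `ℝ³`. -/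
def Sph2 : Set (ℝ × ℝ × ℝ) := {v | v.1 ^ 2 + v.2.1 ^ 2 + v.2.2 ^ 2 = 1}

/-- The involution `σ(x,y,z) = (-x,-y,z)` on the 2-sphere. -/
def sigmaS2 (v : Sph2) : Sph2 :=
  ⟨(-(v : ℝ × ℝ × ℝ).1, -(v : ℝ × ℝ × ℝ).2.1, (v : ℝ × ℝ × ℝ).2.2), by
    have h := v.2
    simp only [Sph2, Set.mem_setOf_eq] at h ⊢
    nlinarith [h]⟩

/-!
The fixed points of `σ` are the two poles `(0,0,±1)`. An equivariant homotopy keeps the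
north pole `N` inside this discrete set, so by connectedness of `[0,1]` the path
`t ↦ H(N,t)` stays at `N`. Hence `N` is a fixed point of `H(·,1)`, but it is not on the equator.
-/

def northPole : Sph2 := ⟨(0, 0, 1), by simp [Sph2]⟩

lemma sigmaS2_northPole : sigmaS2 northPole = northPole :=
  Subtype.ext (by simp [sigmaS2, northPole])

lemma sigmaS2_eq_self_iff {v : Sph2} :
    sigmaS2 v = v ↔ (v : ℝ × ℝ × ℝ).1 = 0 ∧ (v : ℝ × ℝ × ℝ).2.1 = 0 := by
  obtain ⟨⟨x, y, z⟩, hv⟩ := v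
  simp only [sigmaS2, Subtype.mk.injEq, Prod.mk.injEq, neg_eq_self, and_true]

lemma sq_z_eq_one_of_sigmaS2_eq_self {v : Sph2} (h : sigmaS2 v = v) :
    (v : ℝ × ℝ × ℝ).2.2 ^ 2 = 1 := by
  obtain ⟨hx, hy⟩ := sigmaS2_eq_self_iff.mp h
  have hv : _ = (1 : ℝ) := v.2
  rwa [hx, hy, zero_pow two_ne_zero, zero_add, zero_add] at hv

lemma eq_northPole_of_sigmaS2_eq_self {v : Sph2} (h : sigmaS2 v = v)
    (hz : (v : ℝ × ℝ × ℝ).2.2 = 1) : v = northPole := by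
  obtain ⟨hx, hy⟩ := sigmaS2_eq_self_iff.mp h
  obtain ⟨⟨x, y, z⟩, _⟩ := v
  simp_all [northPole]

lemma eq_northPole_of_forall_sigmaS2_eq_self {X : Type*} [TopologicalSpace X]
    [PreconnectedSpace X] {γ : X → Sph2} (hγ : Continuous γ)
    (hfix : ∀ x, sigmaS2 (γ x) = γ x) {x₀ : X} (hx₀ : γ x₀ = northPole) (x : X) :
    γ x = northPole := by
  let z : X → ℝ := fun x ↦ (γ x : ℝ × ℝ × ℝ).2.2
  have hz : Continuous z := continuous_snd.comp <| continuous_snd.comp <|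
    continuous_subtype_val.comp hγ
  have hzx₀ : z x₀ = 1 := by simp [z, hx₀, northPole]
  rcases isPreconnected_univ.eq_one_or_eq_neg_one_of_sq_eq hz.continuousOn
      (fun x _ ↦ sq_z_eq_one_of_sigmaS2_eq_self (hfix x)) with h | h
  · exact eq_northPole_of_sigmaS2_eq_self (hfix x) (h (Set.mem_univ x))
  · have := h (Set.mem_univ x₀)
    norm_num [hzx₀] at this

/-- The equator `A = {(x,y,z) ∈ S² : z = 0}` cannot be realized as the fixed point
set of a map `ℤ₂`-homotopic to the identity of `S²`. -/
theorem no_equivariant_homotopy_realizing_equator :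
    ¬ ∃ H : Sph2 × unitInterval → Sph2,
        Continuous H ∧
        (∀ (v : Sph2) (t : unitInterval), H (sigmaS2 v, t) = sigmaS2 (H (v, t))) ∧
        (∀ v : Sph2, H (v, 0) = v) ∧
        {v : Sph2 | H (v, 1) = v} = {v : Sph2 | (v : ℝ × ℝ × ℝ).2.2 = 0} := by
  rintro ⟨H, hH, hequiv, hH₀, hfix⟩
  have hpath : ∀ t, H (northPole, t) = northPole :=
    eq_northPole_of_forall_sigmaS2_eq_self (hH.comp (Continuous.prodMk_right northPole))
      (fun t ↦ by rw [← hequiv, sigmaS2_northPole]) (hH₀ northPole)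
  have hN : northPole ∈ {v : Sph2 | H (v, 1) = v} := hpath 1
  rw [hfix] at hN
  norm_num [northPole] at hN
end

section
/- Let σ : S² → S² be the involution σ(x,y,z) = (−x,−y,z) on the unit sphere S² ⊂ ℝ³, and let A' = {(x,y,z) ∈ S² : y = 0}. There exists a continuous map H : S² × [0,1] → S² such that H(σ(v),t) = σ(H(v,t)) for all v ∈ S² and t ∈ [0,1], H(v,0) = v for all v ∈ S², and {v ∈ S² : H(v,1) = v} = A'. That is, the meridian circle A' can be realized as the fixed point set of a map ℤ₂-homotopic to the identity. -/
noncomputable def nrm (x y t : ℝ) : ℝ := Real.sqrt (1 + t^2 * y^2 * (1 - x^2))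

lemma nrm_sq (x y z t : ℝ) (h : x^2 + y^2 + z^2 = 1) :
    nrm x y t ^ 2 = 1 + t^2 * y^2 * (1 - x^2) := by
  have h1 : (0:ℝ) ≤ 1 + t^2 * y^2 * (1 - x^2) := by nlinarith [sq_nonneg (t*y)]
  simpa [nrm] using Real.sq_sqrt h1

lemma nrm_ge_one (x y z t : ℝ) (h : x^2 + y^2 + z^2 = 1) : 1 ≤ nrm x y t := by
  have h1 : (1:ℝ) ≤ 1 + t^2 * y^2 * (1 - x^2) := by nlinarith [sq_nonneg (t*y)]
  have := Real.sqrt_le_sqrt h1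
  simpa [nrm] using this

lemma nrm_pos (x y z t : ℝ) (h : x^2 + y^2 + z^2 = 1) : 0 < nrm x y t :=
  lt_of_lt_of_le one_pos (nrm_ge_one x y z t h)

noncomputable def hpt (x y z t : ℝ) : ℝ × ℝ × ℝ :=
  ((x + t * (y * (1 - x^2))) / nrm x y t,
   (y - t * (x * y^2)) / nrm x y t,
   (z - t * (x * y * z)) / nrm x y t)

lemma key_id (x y z t : ℝ) (h : x^2 + y^2 + z^2 = 1) :
    (x + t * (y * (1 - x^2))) ^ 2 + (y - t * (x * y^2)) ^ 2 +
      (z - t * (x * y * z)) ^ 2 = 1 + t^2 * y^2 * (1 - x^2) := by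
  linear_combination (1 - t*x*y)^2 * h

lemma mem_aux (x y z t : ℝ) (h : x^2 + y^2 + z^2 = 1) :
    (hpt x y z t).1 ^ 2 + (hpt x y z t).2.1 ^ 2 + (hpt x y z t).2.2 ^ 2 = 1 := by
  have hn := nrm_pos x y z t h
  have hn2 := nrm_sq x y z t h
  have key : (x + t * (y * (1 - x^2))) ^ 2 + (y - t * (x * y^2)) ^ 2 +
      (z - t * (x * y * z)) ^ 2 = nrm x y t ^ 2 := by
    rw [hn2]; exact key_id x y z t h
  simp only [hpt]
  have expand : ((x + t * (y * (1 - x^2))) / nrm x y t) ^ 2 +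
      ((y - t * (x * y^2)) / nrm x y t) ^ 2 +
      ((z - t * (x * y * z)) / nrm x y t) ^ 2 =
      ((x + t * (y * (1 - x^2))) ^ 2 + (y - t * (x * y^2)) ^ 2 +
      (z - t * (x * y * z)) ^ 2) / nrm x y t ^ 2 := by ring
  rw [expand, key, div_self (by positivity)]

noncomputable def Hmap (p : Sph2 × unitInterval) : Sph2 :=
  ⟨hpt (p.1 : ℝ × ℝ × ℝ).1 (p.1 : ℝ × ℝ × ℝ).2.1 (p.1 : ℝ × ℝ × ℝ).2.2 (p.2 : ℝ),
    mem_aux _ _ _ _ p.1.2⟩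

/-- The meridian circle `A' = {(x,y,z) ∈ S² : y = 0}` can be realized as the fixed
point set of a map `ℤ₂`-homotopic to the identity of `S²`. -/
theorem exists_equivariant_homotopy_realizing_meridian :
    ∃ H : Sph2 × unitInterval → Sph2,
      Continuous H ∧
      (∀ (v : Sph2) (t : unitInterval), H (sigmaS2 v, t) = sigmaS2 (H (v, t))) ∧
      (∀ v : Sph2, H (v, 0) = v) ∧
      {v : Sph2 | H (v, 1) = v} = {v : Sph2 | (v : ℝ × ℝ × ℝ).2.1 = 0} := by
  refine ⟨Hmap, ?_, ?_, ?_, ?_⟩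
  · -- continuity
    have hx : Continuous fun p : Sph2 × unitInterval => (p.1 : ℝ × ℝ × ℝ).1 :=
      (continuous_subtype_val.comp continuous_fst).fst
    have hy : Continuous fun p : Sph2 × unitInterval => (p.1 : ℝ × ℝ × ℝ).2.1 :=
      (continuous_subtype_val.comp continuous_fst).snd.fst
    have hz : Continuous fun p : Sph2 × unitInterval => (p.1 : ℝ × ℝ × ℝ).2.2 :=
      (continuous_subtype_val.comp continuous_fst).snd.snd
    have ht : Continuous fun p : Sph2 × unitInterval => (p.2 : ℝ) :=
      continuous_subtype_val.comp continuous_snd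
    have hnrm : Continuous fun p : Sph2 × unitInterval =>
        nrm (p.1 : ℝ × ℝ × ℝ).1 (p.1 : ℝ × ℝ × ℝ).2.1 (p.2 : ℝ) := by
      unfold nrm
      exact Real.continuous_sqrt.comp (by fun_prop)
    have hne : ∀ p : Sph2 × unitInterval,
        nrm (p.1 : ℝ × ℝ × ℝ).1 (p.1 : ℝ × ℝ × ℝ).2.1 (p.2 : ℝ) ≠ 0 := fun p =>
      ne_of_gt (nrm_pos _ _ (p.1 : ℝ × ℝ × ℝ).2.2 _ p.1.2)
    apply Continuous.subtype_mk
    unfold hpt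
    refine Continuous.prodMk ?_ (Continuous.prodMk ?_ ?_)
    · exact Continuous.div (by fun_prop) hnrm hne
    · exact Continuous.div (by fun_prop) hnrm hne
    · exact Continuous.div (by fun_prop) hnrm hne
  · -- equivariance
    intro v t
    obtain ⟨⟨x, y, z⟩, hv⟩ := v
    apply Subtype.ext
    simp only [Hmap, sigmaS2, hpt]
    have hn : nrm (-x) (-y) (t : ℝ) = nrm x y (t : ℝ) := by
      unfold nrm; ring_nf
    refine Prod.ext ?_ (Prod.ext ?_ ?_) <;> simp only [hn] <;> ring
  · -- H(v,0) = v
    intro v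
    obtain ⟨⟨x, y, z⟩, hv⟩ := v
    apply Subtype.ext
    have ht0 : ((0 : unitInterval) : ℝ) = 0 := rfl
    simp only [Hmap, hpt, ht0]
    have hn : nrm x y 0 = 1 := by simp [nrm]
    rw [hn]
    refine Prod.ext ?_ (Prod.ext ?_ ?_) <;> simp
  · -- fixed point set at t = 1
    ext v
    obtain ⟨⟨x, y, z⟩, hv⟩ := v
    simp only [Set.mem_setOf_eq]
    have hv' : x^2 + y^2 + z^2 = 1 := hv
    have ht1 : ((1 : unitInterval) : ℝ) = 1 := rfl
    constructor
    · intro hfix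
      have h1 := congrArg (fun w => ((w : Sph2) : ℝ × ℝ × ℝ)) hfix
      simp only [Hmap, hpt, ht1] at h1
      set n := nrm x y 1 with hndef
      have hnpos : 0 < n := nrm_pos x y z _ hv'
      have hne : n ≠ 0 := ne_of_gt hnpos
      have e1 : (x + (1:ℝ) * (y * (1 - x^2))) / n = x := congrArg Prod.fst h1
      have e2 : (y - (1:ℝ) * (x * y^2)) / n = y := congrArg (fun w : ℝ × ℝ × ℝ => w.2.1) h1
      have e3 : (z - (1:ℝ) * (x * y * z)) / n = z := congrArg (fun w : ℝ × ℝ × ℝ => w.2.2) h1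
      have e1' : x + y * (1 - x^2) = n * x := by
        field_simp at e1; linarith [e1]
      have e2' : y - x * y^2 = n * y := by
        field_simp at e2; linarith [e2]
      have e3' : z - x * y * z = n * z := by
        field_simp at e3; linarith [e3]
      have hn_eq : n = 1 := by
        linear_combination (-x)*e1' + (-y)*e2' + (-z)*e3' + (1 - n - x*y)*hv'
      have hsq : n ^ 2 = 1 + (1:ℝ)^2 * y^2 * (1 - x^2) := nrm_sq x y z _ hv'
      have hyzero : y^2 * (1 - x^2) = 0 := by rw [hn_eq] at hsq; nlinarith [hsq]
      by_contra hy0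
      have h1x : 1 - x^2 ≥ y^2 := by nlinarith [sq_nonneg z]
      have hy2 : y^2 > 0 := by positivity
      nlinarith [hyzero, h1x, hy2]
    · intro hy0
      apply Subtype.ext
      have hy0' : y = 0 := hy0
      subst hy0'
      simp only [Hmap, hpt, ht1]
      have hn : nrm x 0 1 = 1 := by simp [nrm]
      rw [hn]
      refine Prod.ext ?_ (Prod.ext ?_ ?_) <;> simp
end

section
/- Let X = S² × S¹ with the involution ρ((a,b,c),u) = ((a,b,c), ū), let f : X → X be f((a,b,c),u) = ((−a,−b,−c),u), and let A = {(a,b,0) ∈ S²} × {i,−i}. There exists a continuous map H : X × [0,1] → X such that H(ρ(x),t) = ρ(H(x,t)) for all x ∈ X and t ∈ [0,1], H(x,0) = f(x) for all x ∈ X, and {x ∈ X : H(x,1) = x} = A. That is, A can be realized as the fixed point set of a map ℤ₂-homotopic (not necessarily fiberwise) to f. -/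
/-- The antipodal map `v ↦ -v` on the 2-sphere. -/
def antipS2 (v : Sph2) : Sph2 :=
  ⟨(-(v : ℝ × ℝ × ℝ).1, -(v : ℝ × ℝ × ℝ).2.1, -(v : ℝ × ℝ × ℝ).2.2), by
    have h := v.2
    simp only [Sph2, Set.mem_setOf_eq] at h ⊢
    nlinarith [h]⟩

/-- The unit circle in `ℂ`. -/
def SphC : Set ℂ := {z | ‖z‖ = 1}

/-- Complex conjugation on the unit circle. -/
def conjC (u : SphC) : SphC :=
  ⟨(starRingEnd ℂ) (u : ℂ), by
    have h := u.2
    simp only [SphC, Set.mem_setOf_eq] at h ⊢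
    simpa using h⟩

/-- The total space `X = S² × S¹`. -/
def XS2S1 : Type := Sph2 × SphC

noncomputable instance : TopologicalSpace XS2S1 := by unfold XS2S1; infer_instance

/-- The involution `ρ((a,b,c),u) = ((a,b,c), ū)` on `X = S² × S¹`. -/
def rhoX (x : XS2S1) : XS2S1 := (x.1, conjC x.2)

/-- The map `f((a,b,c),u) = ((-a,-b,-c),u)` on `X = S² × S¹`. -/
def fX (x : XS2S1) : XS2S1 := (antipS2 x.1, x.2)

/-- The subset `A = {(a,b,0) ∈ S²} × {i,-i}` of `X = S² × S¹`. -/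
def AX : Set XS2S1 :=
  {x | (x.1 : ℝ × ℝ × ℝ).2.2 = 0 ∧ ((x.2 : ℂ) = Complex.I ∨ (x.2 : ℂ) = -Complex.I)}

/-!
Rotate the `(a,b)`-plane by the angle `π (1 - t (Im u)²)` and reflect the `c`-coordinate, leaving
`u` alone. At `t = 0` this is the antipodal map. The angle depends only on `(Im u)²`, so the
homotopy commutes with `u ↦ ū`. At `t = 1` the reflection fixes exactly the equator `c = 0`, and the
angle `π (Re u)²` lies in `[0, π]`, so the rotation is trivial exactly when `u = ±i`.
-/

open Real Complex ComplexConjugate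

noncomputable def rotateFlip (θ : ℝ) (v : ℝ × ℝ × ℝ) : ℝ × ℝ × ℝ :=
  (v.1 * Real.cos θ - v.2.1 * Real.sin θ, v.1 * Real.sin θ + v.2.1 * Real.cos θ, -v.2.2)

lemma continuous_rotateFlip : Continuous fun p : ℝ × (ℝ × ℝ × ℝ) => rotateFlip p.1 p.2 := by
  unfold rotateFlip
  fun_prop

lemma rotateFlip_mem_sph2 (θ : ℝ) {v : ℝ × ℝ × ℝ} (hv : v ∈ Sph2) : rotateFlip θ v ∈ Sph2 := by
  simp only [Sph2, Set.mem_ofPred_eq, rotateFlip] at hv ⊢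
  nlinarith [Real.sin_sq_add_cos_sq θ]

lemma rotateFlip_pi (v : ℝ × ℝ × ℝ) : rotateFlip π v = (-v.1, -v.2.1, -v.2.2) := by
  simp [rotateFlip]

lemma rotateFlip_eq_self_iff (θ : ℝ) {v : ℝ × ℝ × ℝ} (hv : v ∈ Sph2) :
    rotateFlip θ v = v ↔ v.2.2 = 0 ∧ Real.cos θ = 1 := by
  obtain ⟨a, b, c⟩ := v
  simp only [Sph2, Set.mem_ofPred_eq] at hv
  simp only [rotateFlip, Prod.mk.injEq]
  constructor
  · rintro ⟨ha, hb, hc⟩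
    have hc0 : c = 0 := by linarith
    refine ⟨hc0, ?_⟩
    have hab : a ^ 2 + b ^ 2 = 1 := by rw [hc0] at hv; linarith
    linear_combination a * ha + b * hb + (1 - Real.cos θ) * hab
  · rintro ⟨hc0, hcos⟩
    have hsin : Real.sin θ = 0 := by nlinarith [Real.sin_sq_add_cos_sq θ]
    simp [hc0, hcos, hsin]

lemma re_sq_add_im_sq_of_norm_eq_one {u : ℂ} (hu : ‖u‖ = 1) : u.re ^ 2 + u.im ^ 2 = 1 := by
  have := Complex.sq_norm u
  rw [hu, Complex.normSq_apply] at this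
  linarith

lemma eq_I_or_eq_neg_I_iff_im_sq_eq_one {u : ℂ} (hu : ‖u‖ = 1) :
    u = I ∨ u = -I ↔ u.im ^ 2 = 1 := by
  constructor
  · rintro (rfl | rfl) <;> simp
  · intro him
    have hre : u.re = 0 := by nlinarith [re_sq_add_im_sq_of_norm_eq_one hu]
    have : (u.im - 1) * (u.im + 1) = 0 := by linear_combination him
    rcases mul_eq_zero.mp this with h | h
    · exact Or.inl (Complex.ext (by simp [hre]) (by simp; linarith))
    · exact Or.inr (Complex.ext (by simp [hre]) (by simp; linarith))

noncomputable def homotopyAngle (t : ℝ) (u : ℂ) : ℝ := π * (1 - t * u.im ^ 2)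

lemma homotopyAngle_conj (t : ℝ) (u : ℂ) : homotopyAngle t (conj u) = homotopyAngle t u := by
  simp [homotopyAngle]

lemma homotopyAngle_zero (u : ℂ) : homotopyAngle 0 u = π := by
  simp [homotopyAngle]

lemma cos_homotopyAngle_one_eq_one_iff {u : ℂ} (hu : ‖u‖ = 1) :
    Real.cos (homotopyAngle 1 u) = 1 ↔ u = I ∨ u = -I := by
  have hnorm := re_sq_add_im_sq_of_norm_eq_one hu
  have hangle : homotopyAngle 1 u = π * u.re ^ 2 := by
    rw [homotopyAngle]; linear_combination (-π) * hnorm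
  have hre_le : u.re ^ 2 ≤ 1 := by nlinarith
  rw [eq_I_or_eq_neg_I_iff_im_sq_eq_one hu, hangle,
    Real.cos_eq_one_iff_of_lt_of_lt (by nlinarith [pi_pos]) (by nlinarith [pi_pos])]
  constructor
  · intro h
    nlinarith [pi_pos]
  · intro h
    have : u.re ^ 2 = 0 := by linarith
    simp [this]

noncomputable def rotationHomotopy (p : XS2S1 × unitInterval) : XS2S1 :=
  (⟨rotateFlip (homotopyAngle p.2 p.1.2) p.1.1, rotateFlip_mem_sph2 _ p.1.1.2⟩, p.1.2)

lemma continuous_rotationHomotopy : Continuous rotationHomotopy := by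
  have hangle : Continuous fun p : XS2S1 × unitInterval => homotopyAngle p.2 p.1.2 := by
    unfold homotopyAngle
    fun_prop
  refine .prodMk (.subtype_mk ?_ _) (by fun_prop)
  exact continuous_rotateFlip.comp (hangle.prodMk (by fun_prop))

lemma rotationHomotopy_rhoX (x : XS2S1) (t : unitInterval) :
    rotationHomotopy (rhoX x, t) = rhoX (rotationHomotopy (x, t)) :=
  Prod.ext (Subtype.ext (congrArg (rotateFlip · _) (homotopyAngle_conj _ _))) rfl

lemma rotationHomotopy_zero (x : XS2S1) : rotationHomotopy (x, 0) = fX x :=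
  Prod.ext (Subtype.ext (by simp [rotationHomotopy, homotopyAngle_zero, rotateFlip_pi, fX, antipS2]))
    rfl

lemma rotationHomotopy_one_eq_self_iff (x : XS2S1) : rotationHomotopy (x, 1) = x ↔ x ∈ AX := by
  refine (Prod.ext_iff (α := Sph2) (β := SphC)).trans ?_
  rw [Subtype.ext_iff]
  simp only [rotationHomotopy, Set.Icc.coe_one, and_true]
  rw [rotateFlip_eq_self_iff _ x.1.2, cos_homotopyAngle_one_eq_one_iff x.2.2]
  rfl

/-- The set `A = {(a,b,0)} × {i,-i}` can be realized as the fixed point set of a map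
`ℤ₂`-homotopic (not necessarily fiberwise) to `f((a,b,c),u) = ((-a,-b,-c),u)`. -/
theorem exists_equivariant_homotopy_realizing_A :
    ∃ H : XS2S1 × unitInterval → XS2S1,
      Continuous H ∧
      (∀ (x : XS2S1) (t : unitInterval), H (rhoX x, t) = rhoX (H (x, t))) ∧
      (∀ x : XS2S1, H (x, 0) = fX x) ∧
      {x : XS2S1 | H (x, 1) = x} = AX :=
  ⟨rotationHomotopy, continuous_rotationHomotopy, rotationHomotopy_rhoX, rotationHomotopy_zero,
    Set.ext rotationHomotopy_one_eq_self_iff⟩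
end

section
/- Let X = S² × S¹ with the involution ρ((a,b,c),u) = ((a,b,c), ū), and let A = {(a,b,0) ∈ S²} × {i,−i}. Suppose g : X → X is continuous, ρ-equivariant (g(ρ(x)) = ρ(g(x)) for all x), fiber-preserving over the projection π₁ : X → S² (i.e. π₁(g(v,u)) = π₁(g(v,u')) for all v ∈ S² and u,u' ∈ S¹), and Fix(g) = A. Then g maps S² × {1} into S² × {−1} and maps S² × {−1} into S² × {1}. -/
/-- The point `1` on the unit circle. -/
def oneC : SphC := ⟨1, by simp [SphC]⟩

/-- The point `-1` on the unit circle. -/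
def negOneC : SphC := ⟨-1, by simp [SphC]⟩

/-!
For `w = ±1` the point `(v, w)` is fixed by `ρ`, so by equivariance so is `g (v, w)`: its circle
coordinate is `±1`. Being continuous on the connected sphere, that coordinate does not depend on
`v`. Over an equator point `v` the fibre contains the fixed point `(v, i)`, so fiber-preservation
gives `g (v, w) = (v, ±1)`; as `(v, w) ∉ A = Fix g`, it must be `(v, -w)`.
-/

lemma isConnected_sph2 : IsConnected Sph2 := by
  let F : EuclideanSpace ℝ (Fin 3) → ℝ × ℝ × ℝ := fun x => (x 0, x 1, x 2)
  have hF : Continuous F := by fun_prop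
  have hrank : 1 < Module.rank ℝ (EuclideanSpace ℝ (Fin 3)) := by
    rw [← Module.finrank_eq_rank, finrank_euclideanSpace_fin]; norm_num
  have himage : F '' Metric.sphere 0 1 = Sph2 := by
    ext p
    simp only [Set.mem_image, mem_sphere_zero_iff_norm, Sph2, Set.mem_ofPred_eq]
    constructor
    · rintro ⟨x, hx, rfl⟩
      simpa [hx, Fin.sum_univ_three, F] using (EuclideanSpace.real_norm_sq_eq x).symm
    · intro hp
      refine ⟨!₂[p.1, p.2.1, p.2.2], ?_, rfl⟩
      rw [← pow_eq_one_iff_of_nonneg (norm_nonneg _) two_ne_zero, EuclideanSpace.real_norm_sq_eq]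
      simpa [Fin.sum_univ_three] using hp
  exact himage ▸ (isConnected_sphere hrank 0 zero_le_one).image F hF.continuousOn

instance : ConnectedSpace Sph2 := Subtype.connectedSpace isConnected_sph2

lemma conjC_eq_self_iff {u : SphC} : conjC u = u ↔ (u : ℂ) = 1 ∨ (u : ℂ) = -1 := by
  have hu : ‖(u : ℂ)‖ = 1 := u.2
  rw [← Subtype.coe_inj, conjC, Complex.conj_eq_iff_real]
  constructor
  · rintro ⟨r, hr⟩
    rw [hr, Complex.norm_real, Real.norm_eq_abs, abs_eq zero_le_one] at hu
    rcases hu with rfl | rfl <;> simp [hr]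
  · rintro (h | h) <;> rw [h]
    exacts [⟨1, by simp⟩, ⟨-1, by simp⟩]

lemma snd_apply_eq_one_or_neg_one {g : XS2S1 → XS2S1}
    (hequiv : ∀ x : XS2S1, g (rhoX x) = rhoX (g x)) {w : SphC} (hw : conjC w = w) (v : Sph2) :
    ((g (v, w)).2 : ℂ) = 1 ∨ ((g (v, w)).2 : ℂ) = -1 := by
  have hρ := hequiv (v, w)
  simp only [rhoX, hw] at hρ
  exact conjC_eq_self_iff.mp (congrArg Prod.snd hρ).symm

lemma snd_apply_eq_of_conjC_eq_self {g : XS2S1 → XS2S1} (hcont : Continuous g)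
    (hequiv : ∀ x : XS2S1, g (rhoX x) = rhoX (g x)) {w : SphC} (hw : conjC w = w)
    (v v' : Sph2) : ((g (v, w)).2 : ℂ) = (g (v', w)).2 :=
  isPreconnected_univ.constant_of_mapsTo (T := {1, -1}) (Set.toFinite _).isDiscrete
    (by fun_prop) (fun v _ => snd_apply_eq_one_or_neg_one hequiv hw v) trivial trivial

lemma mk_notMem_AX {v : Sph2} {w : SphC} (hw : (w : ℂ) = 1 ∨ (w : ℂ) = -1) :
    ((v, w) : XS2S1) ∉ AX := by
  rintro ⟨-, hI⟩
  rcases hw with h | h <;> rcases hI with h' | h' <;> simpa [h] using congrArg Complex.im h'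

lemma snd_apply_eq_neg_of_mem_equator {g : XS2S1 → XS2S1}
    (hequiv : ∀ x : XS2S1, g (rhoX x) = rhoX (g x))
    (hfib : ∀ (v : Sph2) (u u' : SphC), (g (v, u)).1 = (g (v, u')).1)
    (hfix : {x : XS2S1 | g x = x} = AX) {w : SphC} (hw : (w : ℂ) = 1 ∨ (w : ℂ) = -1)
    {v : Sph2} (hv : (v : ℝ × ℝ × ℝ).2.2 = 0) : ((g (v, w)).2 : ℂ) = -w := by
  let i : SphC := ⟨Complex.I, by simp [SphC]⟩
  have hfix_i : g (v, i) = (v, i) := hfix.symm.subset ⟨hv, .inl rfl⟩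
  have hfst : (g (v, w)).1 = v := by rw [hfib v w i, hfix_i]
  have hne : ((g (v, w)).2 : ℂ) ≠ w := fun heq =>
    mk_notMem_AX hw (hfix.subset (Prod.ext hfst (Subtype.ext heq) : g (v, w) = (v, w)))
  rcases snd_apply_eq_one_or_neg_one hequiv (conjC_eq_self_iff.mpr hw) v with h | h <;>
    rcases hw with h' | h' <;> simp_all

lemma snd_apply_eq_neg_of_eq_one_or_eq_neg_one {g : XS2S1 → XS2S1} (hcont : Continuous g)
    (hequiv : ∀ x : XS2S1, g (rhoX x) = rhoX (g x))
    (hfib : ∀ (v : Sph2) (u u' : SphC), (g (v, u)).1 = (g (v, u')).1)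
    (hfix : {x : XS2S1 | g x = x} = AX) (w : SphC) (hw : (w : ℂ) = 1 ∨ (w : ℂ) = -1)
    (v : Sph2) : ((g (v, w)).2 : ℂ) = -w := by
  let v₀ : Sph2 := ⟨(1, 0, 0), by norm_num [Sph2]⟩
  rw [snd_apply_eq_of_conjC_eq_self hcont hequiv (conjC_eq_self_iff.mpr hw) v v₀]
  exact snd_apply_eq_neg_of_mem_equator hequiv hfib hfix hw rfl

/-- Any continuous `ρ`-equivariant fiber-preserving selfmap of `X = S² × S¹` whose fixed
point set is `A = {(a,b,0)} × {i,-i}` maps `S² × {1}` into `S² × {-1}` and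
`S² × {-1}` into `S² × {1}`. -/
theorem fiber_preserving_map_swaps_fixed_spheres
    (g : XS2S1 → XS2S1) (hcont : Continuous g)
    (hequiv : ∀ x : XS2S1, g (rhoX x) = rhoX (g x))
    (hfib : ∀ (v : Sph2) (u u' : SphC), (g (v, u)).1 = (g (v, u')).1)
    (hfix : {x : XS2S1 | g x = x} = AX) :
    ∀ v : Sph2, ((g (v, oneC)).2 : ℂ) = -1 ∧ ((g (v, negOneC)).2 : ℂ) = 1 := by
  have swap := snd_apply_eq_neg_of_eq_one_or_eq_neg_one hcont hequiv hfib hfix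
  exact fun v => ⟨by simpa [oneC] using swap oneC (.inl rfl) v,
    by simpa [negOneC] using swap negOneC (.inr rfl) v⟩
end

section
/- Let G be a group acting by homeomorphisms on topological spaces E, B and X, and let p : E → B be a continuous G-equivariant map admitting a G-equivariant lifting function: a continuous map Λ : Ω_p → C([0,1],E), where Ω_p = {(e,α) ∈ E × C([0,1],B) : α(0) = p(e)} carries the subspace topology (path spaces with the compact-open topology), satisfying Λ(e,α)(0) = e, p(Λ(e,α)(t)) = α(t) for all t, Λ(e, const_{p(e)})(t) = e for all t, and Λ(g·e, g·α) = g·Λ(e,α) for all g ∈ G (where (g·α)(t) = g·α(t)). Let A ⊆ X be a closed G-invariant subset, and let H̄ : (X×{0}) ∪ (A×[0,1]) → E be a continuous G-equivariant map with p(H̄(a,t)) = p(H̄(a,0)) for all (a,t) ∈ A×[0,1]. Suppose H̄ admits some continuous G-equivariant extension H' : X × [0,1] → E. Then the map H : X × [0,1] → E defined by H(x,t) = Λ( H'(x,t), s ↦ p(H'(x,(1−s)t)) )(1) is continuous, G-equivariant, extends H̄ (that is, H(x,0) = H̄(x,0) for all x ∈ X and H(a,t) = H̄(a,t) for all (a,t)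 ∈ A×[0,1]), and satisfies p(H(x,t)) = p(H(x,0)) for all (x,t) ∈ X × [0,1]. -/
/-! Lifting the base path `s ↦ p (H' (x, (1-s)t))`, which runs from `p (H' (x,t))` back to
`p (H' (x,0))`, and taking its endpoint moves `H' (x,t)` into the fibre over `p (H' (x,0))`.
Where that base path is constant (at `t = 0`, and on `A × I` where `H̄` is already vertical)
the lift is constant, so nothing moves; continuity and equivariance of `H` are inherited from
those of `H'` and of the lifting function. -/

/-- The action of a group element on a path, acting pointwise. -/
def smulPath {G B : Type*} [TopologicalSpace B] [SMul G B]
    (hGB : ∀ g : G, Continuous fun b : B => g • b) (g : G)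
    (α : C(unitInterval, B)) : C(unitInterval, B) :=
  ⟨fun s => g • α s, (hGB g).comp α.continuous⟩

/-- The path `s ↦ p (H' (x, (1-s)·t))` in the base, traced backwards from `p (H' (x,t))`
to `p (H' (x,0))`. -/
def basePath {X B E : Type*} [TopologicalSpace X] [TopologicalSpace B] [TopologicalSpace E]
    (p : E → B) (hp : Continuous p) (H' : X × unitInterval → E) (hH' : Continuous H')
    (x : X) (t : unitInterval) : C(unitInterval, B) :=
  ⟨fun s => p (H' (x, unitInterval.symm s * t)),
    hp.comp (hH'.comp (continuous_const.prodMk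
      (Continuous.subtype_mk
        ((continuous_subtype_val.comp unitInterval.continuous_symm).mul continuous_const) _)))⟩

open unitInterval

section BasePath

variable {G X B E : Type*} [TopologicalSpace X] [TopologicalSpace B] [TopologicalSpace E]
  {p : E → B} (hp : Continuous p) {H' : X × I → E} (hH' : Continuous H')

@[simp]
theorem basePath_apply (x : X) (t s : I) :
    basePath p hp H' hH' x t s = p (H' (x, σ s * t)) :=
  rfl

theorem basePath_apply_zero (x : X) (t : I) : basePath p hp H' hH' x t 0 = p (H' (x, t)) := by
  simp

theorem basePath_apply_one (x : X) (t : I) : basePath p hp H' hH' x t 1 = p (H' (x, 0)) := by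
  simp

theorem basePath_eq_const {x : X} {t : I} (hvert : ∀ u, p (H' (x, u)) = p (H' (x, t))) :
    basePath p hp H' hH' x t = ContinuousMap.const I (p (H' (x, t))) := by
  ext s
  exact hvert _

theorem basePath_zero (x : X) :
    basePath p hp H' hH' x 0 = ContinuousMap.const I (p (H' (x, 0))) := by
  ext s
  simp

theorem continuous_basePath : Continuous fun q : X × I => basePath p hp H' hH' q.1 q.2 := by
  refine ContinuousMap.continuous_of_continuous_uncurry _ ?_
  change Continuous fun w : (X × I) × I => p (H' (w.1.1, σ w.2 * w.1.2))
  fun_prop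

theorem basePath_smul [Group G] [MulAction G X] [MulAction G B] [MulAction G E]
    (hGB : ∀ g : G, Continuous fun b : B => g • b) (hpeq : ∀ (g : G) (e : E), p (g • e) = g • p e)
    (hH'equiv : ∀ (g : G) (x : X) (t : I), H' (g • x, t) = g • H' (x, t)) (g : G) (x : X) (t : I) :
    basePath p hp H' hH' (g • x) t = smulPath hGB g (basePath p hp H' hH' x t) := by
  ext s
  simp only [basePath_apply, hH'equiv, hpeq]
  rfl

end BasePath

section LiftingFunction

variable {G E B : Type*} [TopologicalSpace E] [TopologicalSpace B] {p : E → B}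
  {Λ : {q : E × C(I, B) // q.2 0 = p q.1} → C(I, E)}

theorem lift_eq_of_eq_const
    (hΛconst : ∀ (e : E) (t : I), Λ ⟨(e, ContinuousMap.const I (p e)), rfl⟩ t = e)
    {e : E} {α : C(I, B)} (hα : α = ContinuousMap.const I (p e)) (h : α 0 = p e) (t : I) :
    Λ ⟨(e, α), h⟩ t = e := by
  subst hα
  exact hΛconst e t

theorem lift_smul [Group G] [MulAction G E] [MulAction G B]
    {hGB : ∀ g : G, Continuous fun b : B => g • b} (hpeq : ∀ (g : G) (e : E), p (g • e) = g • p e)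
    (hΛequiv : ∀ (g : G) (q : {q : E × C(I, B) // q.2 0 = p q.1}) (t : I),
      Λ ⟨(g • q.1.1, smulPath hGB g q.1.2), by
          show g • q.1.2 0 = p (g • q.1.1)
          rw [q.2, hpeq]⟩ t = g • Λ q t)
    (g : G) {e : E} {α β : C(I, B)} (hβ : β = smulPath hGB g α) (hα : α 0 = p e)
    (hβ0 : β 0 = p (g • e)) (t : I) :
    Λ ⟨(g • e, β), hβ0⟩ t = g • Λ ⟨(e, α), hα⟩ t := by
  subst hβ
  exact hΛequiv g ⟨(e, α), hα⟩ t

end LiftingFunction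

def verticalLift {X B E : Type*} [TopologicalSpace X] [TopologicalSpace B] [TopologicalSpace E]
    {p : E → B} (hp : Continuous p) (Λ : {q : E × C(I, B) // q.2 0 = p q.1} → C(I, E))
    {H' : X × I → E} (hH' : Continuous H') (q : X × I) : E :=
  Λ ⟨(H' q, basePath p hp H' hH' q.1 q.2), basePath_apply_zero hp hH' q.1 q.2⟩ 1

section VerticalLift

variable {G X B E : Type*} [TopologicalSpace X] [TopologicalSpace B] [TopologicalSpace E]
  {p : E → B} (hp : Continuous p) {Λ : {q : E × C(I, B) // q.2 0 = p q.1} → C(I, E)}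
  {H' : X × I → E} (hH' : Continuous H')

theorem continuous_verticalLift (hΛcont : Continuous Λ) : Continuous (verticalLift hp Λ hH') :=
  (continuous_eval_const 1).comp <| hΛcont.comp <|
    (hH'.prodMk (continuous_basePath hp hH')).subtype_mk _

theorem verticalLift_eq_of_vertical
    (hΛconst : ∀ (e : E) (t : I), Λ ⟨(e, ContinuousMap.const I (p e)), rfl⟩ t = e)
    {x : X} {t : I} (hvert : ∀ u, p (H' (x, u)) = p (H' (x, t))) :
    verticalLift hp Λ hH' (x, t) = H' (x, t) :=
  lift_eq_of_eq_const hΛconst (basePath_eq_const hp hH' hvert) _ 1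

theorem verticalLift_apply_zero
    (hΛconst : ∀ (e : E) (t : I), Λ ⟨(e, ContinuousMap.const I (p e)), rfl⟩ t = e) (x : X) :
    verticalLift hp Λ hH' (x, 0) = H' (x, 0) :=
  lift_eq_of_eq_const hΛconst (basePath_zero hp hH' x) _ 1

theorem map_verticalLift (hΛlift : ∀ q (t : I), p (Λ q t) = q.1.2 t) (q : X × I) :
    p (verticalLift hp Λ hH' q) = p (H' (q.1, 0)) :=
  (hΛlift _ 1).trans (basePath_apply_one hp hH' q.1 q.2)

theorem verticalLift_smul [Group G] [MulAction G X] [MulAction G B] [MulAction G E]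
    {hGB : ∀ g : G, Continuous fun b : B => g • b} (hpeq : ∀ (g : G) (e : E), p (g • e) = g • p e)
    (hΛequiv : ∀ (g : G) (q : {q : E × C(I, B) // q.2 0 = p q.1}) (t : I),
      Λ ⟨(g • q.1.1, smulPath hGB g q.1.2), by
          show g • q.1.2 0 = p (g • q.1.1)
          rw [q.2, hpeq]⟩ t = g • Λ q t)
    (hH'equiv : ∀ (g : G) (x : X) (t : I), H' (g • x, t) = g • H' (x, t)) (g : G) (x : X) (t : I) :
    verticalLift hp Λ hH' (g • x, t) = g • verticalLift hp Λ hH' (x, t) := by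
  unfold verticalLift
  simp only [hH'equiv]
  exact lift_smul hpeq hΛequiv g (basePath_smul hp hH' hGB hpeq hH'equiv g x t) _ _ 1

end VerticalLift

/-- Given a `G`-fibration `p : E → B` (i.e. a `G`-equivariant map with a `G`-equivariant
lifting function `Λ`), a closed `G`-invariant subset `A ⊆ X`, a `G`-map
`H̄ : (X×{0}) ∪ (A×I) → E` that is `p`-vertical on `A × I`, and a `G`-equivariant
extension `H' : X × I → E` of `H̄`, the map
`H(x,t) = Λ(H'(x,t), s ↦ p (H'(x,(1-s)t)))(1)` is a continuous `G`-equivariant extension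
of `H̄` which is `p`-vertical everywhere: `p (H (x,t)) = p (H (x,0))`. -/
theorem equivariant_vertical_extension
    {G E B X : Type*} [Group G]
    [TopologicalSpace E] [TopologicalSpace B] [TopologicalSpace X]
    [MulAction G E] [MulAction G B] [MulAction G X]
    (hGB : ∀ g : G, Continuous fun b : B => g • b)
    (p : E → B) (hp : Continuous p) (hpeq : ∀ (g : G) (e : E), p (g • e) = g • p e)
    (Λ : {q : E × C(unitInterval, B) // q.2 0 = p q.1} → C(unitInterval, E))
    (hΛcont : Continuous Λ)
    (hΛlift : ∀ q (t : unitInterval), p (Λ q t) = q.1.2 t)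
    (hΛconst : ∀ (e : E) (t : unitInterval),
      Λ ⟨(e, ContinuousMap.const unitInterval (p e)), rfl⟩ t = e)
    (hΛequiv : ∀ (g : G) (q : {q : E × C(unitInterval, B) // q.2 0 = p q.1})
        (t : unitInterval),
      Λ ⟨(g • q.1.1, smulPath hGB g q.1.2), by
          show g • q.1.2 0 = p (g • q.1.1)
          rw [q.2, hpeq]⟩ t = g • Λ q t)
    (A : Set X)
    (S : Set (X × unitInterval))
    (hS : S = (Set.univ ×ˢ ({0} : Set unitInterval)) ∪ (A ×ˢ Set.univ))
    (Hbar : X × unitInterval → E)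
    (hHbarVert : ∀ a ∈ A, ∀ t : unitInterval, p (Hbar (a, t)) = p (Hbar (a, 0)))
    (H' : X × unitInterval → E) (hH'cont : Continuous H')
    (hH'equiv : ∀ (g : G) (x : X) (t : unitInterval), H' (g • x, t) = g • H' (x, t))
    (hH'ext : Set.EqOn H' Hbar S)
    (H : X × unitInterval → E)
    (hHdef : ∀ (x : X) (t : unitInterval),
      H (x, t) = Λ ⟨(H' (x, t), basePath p hp H' hH'cont x t), by
        show p (H' (x, unitInterval.symm 0 * t)) = p (H' (x, t))
        rw [unitInterval.symm_zero, one_mul]⟩ 1) :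
    Continuous H ∧
    (∀ (g : G) (x : X) (t : unitInterval), H (g • x, t) = g • H (x, t)) ∧
    (∀ x : X, H (x, 0) = Hbar (x, 0)) ∧
    (∀ a ∈ A, ∀ t : unitInterval, H (a, t) = Hbar (a, t)) ∧
    (∀ (x : X) (t : unitInterval), p (H (x, t)) = p (H (x, 0))) := by
  obtain rfl : H = verticalLift hp Λ hH'cont := funext fun q => hHdef q.1 q.2
  have hS0 : ∀ x, (x, (0 : I)) ∈ S := fun x => hS ▸ Or.inl ⟨trivial, rfl⟩
  have hSA : ∀ a ∈ A, ∀ t, (a, t) ∈ S := fun a ha t => hS ▸ Or.inr ⟨ha, trivial⟩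
  have hH'vert : ∀ a ∈ A, ∀ u t, p (H' (a, u)) = p (H' (a, t)) := fun a ha u t => by
    rw [hH'ext (hSA a ha u), hH'ext (hSA a ha t), hHbarVert a ha u, hHbarVert a ha t]
  refine ⟨continuous_verticalLift hp hH'cont hΛcont,
    verticalLift_smul hp hH'cont hpeq hΛequiv hH'equiv, fun x => ?_, fun a ha t => ?_,
    fun x t => ?_⟩
  · rw [verticalLift_apply_zero hp hH'cont hΛconst, hH'ext (hS0 x)]
  · rw [verticalLift_eq_of_vertical hp hH'cont hΛconst (hH'vert a ha · t), hH'ext (hSA a ha t)]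
  · rw [map_verticalLift hp hH'cont hΛlift, verticalLift_apply_zero hp hH'cont hΛconst]
end
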